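/- Let p ≥ 1 and 1 ≤ j ≤ N−1, and suppose f_n ↣ f in L^p(T^N). For g ∈ L^1(T^N), define ĝ ∈ L^1(T^{N−j}) by ĝ(t_{j+1},…,t_N) = ∫_{T^j} g(·,t_{j+1},…,t_N) dμ_j (the average over the first j variables). Then f̂_n ↣ f̂ in L^p(T^{N−j}). -/

import Mathlib

open MeasureTheory Filter Topology Matrix
open scoped Classical ENNReal ComplexOrder

noncomputable section

/-- The unit circle `T`, parametrized as `ℝ / 2πℤ`. -/
abbrev 𝕋 : Type := AddCircle (2 * Real.pi)

instance : Fact (0 < 2 * Real.pi) := ⟨by positivity⟩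

/-- The normalized Lebesgue measure `dμ₁ = dt/(2π)` on the circle. -/
def μT : Measure 𝕋 := AddCircle.haarAddCircle

/-- The normalized Lebesgue measure on the `N`-torus. -/
def μTN (N : ℕ) : Measure (Fin N → 𝕋) := Measure.pi fun _ => μT

instance : IsProbabilityMeasure μT := by unfold μT; infer_instance
instance (N : ℕ) : IsProbabilityMeasure (μTN N) := by unfold μTN; infer_instance

/-- The point `e^{iθ}` of the unit circle of `ℂ` corresponding to `θ : 𝕋`. -/
def bpt (θ : 𝕋) : ℂ := (AddCircle.toCircle θ : ℂ)

/-- `F` is an analytic extension of the boundary function `f` witnessing `f ∈ H^p(T)`: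
`F` is analytic in the open unit disk, has `p`-means over circles of radius `r < 1`
bounded uniformly in `r`, and has radial limits `f` a.e. on the boundary. -/
structure HardyExt (p : ℝ) (f : 𝕋 → ℂ) (F : ℂ → ℂ) : Prop where
  diff : DifferentiableOn ℂ F (Metric.ball 0 1)
  bddMeans : ∃ C : ℝ, ∀ r : ℝ, 0 ≤ r → r < 1 →
    (∫ θ, ‖F ((r : ℂ) * bpt θ)‖ ^ p ∂μT) ≤ C
  boundary : ∀ᵐ θ ∂μT,
    Tendsto (fun r : ℝ => F ((r : ℂ) * bpt θ)) (nhdsWithin 1 (Set.Iio 1)) (nhds (f θ))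

/-- The classical Hardy space `H^p(T)` (p > 0), identified with boundary values in `L^p(T)`. -/
def MemHp (p : ℝ) (f : 𝕋 → ℂ) : Prop :=
  MemLp f (ENNReal.ofReal p) μT ∧ ∃ F, HardyExt p f F

/-- The value at `0` of the analytic extension of `f` (junk value `0` if `f ∉ H^p`). -/
def hardyVal0 (p : ℝ) (f : 𝕋 → ℂ) : ℂ :=
  if h : ∃ F, HardyExt p f F then h.choose 0 else 0

/-- Extended-real valued `log|z|`, with `log 0 = -∞`. -/
def elog (z : ℂ) : EReal := if z = 0 then ⊥ else ((Real.log ‖z‖ : ℝ) : EReal)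

/-- The extended-real valued integral `∫ log|f| dν` (possibly `-∞`;
junk `⊤`-valued only when the positive part fails to be integrable). -/
def logAbsIntegral {α : Type*} [MeasurableSpace α] (ν : Measure α) (f : α → ℂ) : EReal :=
  ((∫⁻ x, ENNReal.ofReal (Real.log ‖f x‖) ∂ν : ℝ≥0∞) : EReal) -
  ((∫⁻ x, (if f x = 0 then (⊤ : ℝ≥0∞)
          else ENNReal.ofReal (-(Real.log ‖f x‖))) ∂ν : ℝ≥0∞) : EReal)

/-- `f` is an outer function of the Hardy space `H^p(T)`:
`f ∈ H^p`, `f ≢ 0` and `log|f(0)| = ∫_T log|f| dμ₁`. -/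
def IsOuter1 (p : ℝ) (f : 𝕋 → ℂ) : Prop :=
  MemHp p f ∧ ¬ (f =ᵐ[μT] (fun _ => (0:ℂ))) ∧ elog (hardyVal0 p f) = logAbsIntegral μT f

/-- The slice `f_{t₂,…,t_N} = f(·,t₂,…,t_N)` in the first variable. -/
def slice1 {N : ℕ} (f : (Fin (N + 1) → 𝕋) → ℂ) (ts : Fin N → 𝕋) : 𝕋 → ℂ :=
  fun t => f (Fin.cons t ts)

/-- `f̂₁(t₂,…,t_N)`: the value at `0` of the analytic extension of the slice
`f(·,t₂,…,t_N)` to the unit disk. -/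
def hatF {N : ℕ} (p : ℝ) (f : (Fin (N + 1) → 𝕋) → ℂ) : (Fin N → 𝕋) → ℂ :=
  fun ts => hardyVal0 p (slice1 f ts)

/-- Membership in `H^p(T^N)`, `p > 0` (Definition 2.1, recursive in `N`). -/
def MemHpN : (N : ℕ) → ℝ → ((Fin N → 𝕋) → ℂ) → Prop
  | 0, _, _ => False
  | 1, p, f => MemHp p (fun t => f (fun _ => t))
  | (N + 2), p, f =>
      MemLp f (ENNReal.ofReal p) (μTN (N + 2)) ∧
      (∀ᵐ ts ∂μTN (N + 1), MemHp p (slice1 f ts)) ∧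
      MemHpN (N + 1) p (hatF p f)

/-- Membership in the outer class `H^p_O(T^N)` (Definition 2.2, recursive in `N`). -/
def MemHpON : (N : ℕ) → ℝ → ((Fin N → 𝕋) → ℂ) → Prop
  | 0, _, _ => False
  | 1, p, f => IsOuter1 p (fun t => f (fun _ => t))
  | (N + 2), p, f =>
      (∀ᵐ ts ∂μTN (N + 1), IsOuter1 p (slice1 f ts)) ∧
      MemHpON (N + 1) p (hatF p f)

/-- Iterated hat: `f̂_k`, taking the value at 0 of the analytic extension in the
first variable `k` times, landing on functions of one variable. -/
def hatIter (p : ℝ) : (k : ℕ) → ((Fin (k + 1) → 𝕋) → ℂ) → ((Fin 1 → 𝕋) → ℂ)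
  | 0, f => f
  | (k + 1), f => hatIter p k (hatF p f)

/-- `f(0,…,0)`: the value at the origin of the successive analytic extensions. -/
def valOrigin (p : ℝ) {k : ℕ} (f : (Fin (k + 1) → 𝕋) → ℂ) : ℂ :=
  hardyVal0 p (fun t => hatIter p k f (fun _ => t))

/-- The half-plane `H_N ⊂ ℤ^N` of lattice points. -/
def halfPlane : (N : ℕ) → (Fin N → ℤ) → Prop
  | 0, _ => True
  | (N + 1), k => 0 < k 0 ∨ (k 0 = 0 ∧ halfPlane N (fun i => k i.succ))

/-- Fourier coefficients `C_k{f}` on the N-torus. -/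
def fourierCoeffN {N : ℕ} (f : (Fin N → 𝕋) → ℂ) (k : Fin N → ℤ) : ℂ :=
  ∫ t, f t * ∏ i, bpt (t i) ^ (-(k i)) ∂μTN N

/-- Fourier coefficients on the circle. -/
def fourierCoeffT (f : 𝕋 → ℂ) (k : ℤ) : ℂ := ∫ t, f t * bpt t ^ (-k) ∂μT

/-- `f` is of analytic type on `T^N` and in `L^p`: the analytic-type definition
of `H^p(T^N)` for `p ≥ 1`. -/
def MemAnalyticType (N : ℕ) (p : ℝ) (f : (Fin N → 𝕋) → ℂ) : Prop :=
  MemLp f (ENNReal.ofReal p) (μTN N) ∧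
    ∀ k : Fin N → ℤ, ¬ halfPlane N k → fourierCoeffN f k = 0

/-- The slice of `f` in the first `a` of `N = a + b` variables,
with the last `b` variables frozen at `y`. -/
def splitL {N a b : ℕ} (h : a + b = N) (f : (Fin N → 𝕋) → ℂ) (y : Fin b → 𝕋) :
    (Fin a → 𝕋) → ℂ :=
  fun x => f fun i => Fin.append x y (Fin.cast h.symm i)

/-- `H^p(T^N_a)` (Definition 2.4): `f ∈ L^p(T^N)` and a.e. slice in the first `a`
variables belongs to `H^p(T^a)`. -/
def MemHpNl (p : ℝ) {N : ℕ} (a b : ℕ) (h : a + b = N) (f : (Fin N → 𝕋) → ℂ) : Prop :=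
  MemLp f (ENNReal.ofReal p) (μTN N) ∧ ∀ᵐ y ∂μTN b, MemHpN a p (splitL h f y)

/-- `H^p_O(T^N_a)` (Definition 2.4, outer version). -/
def MemHpONl (p : ℝ) {N : ℕ} (a b : ℕ) (h : a + b = N) (f : (Fin N → 𝕋) → ℂ) : Prop :=
  MemLp f (ENNReal.ofReal p) (μTN N) ∧ ∀ᵐ y ∂μTN b, MemHpON a p (splitL h f y)

/-- Matrix functions with entries in `H^p(T^N_a)`. -/
def MatMemHpNl (p : ℝ) {N : ℕ} (a b : ℕ) (h : a + b = N) {d : ℕ}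
    (F : (Fin N → 𝕋) → Matrix (Fin d) (Fin d) ℂ) : Prop :=
  ∀ i j, MemHpNl p a b h (fun t => F t i j)

/-- Outer-type matrix functions of `H^2(T^N_a)_O^{d×d}`: entries in `H^2(T^N_a)`
and determinant in `H^r_O(T^N_a)` for some `r > 0`. -/
def MatOuterHpNl {N : ℕ} (a b : ℕ) (h : a + b = N) {d : ℕ}
    (F : (Fin N → 𝕋) → Matrix (Fin d) (Fin d) ℂ) : Prop :=
  MatMemHpNl 2 a b h F ∧ ∃ r : ℝ, 0 < r ∧ MemHpONl r a b h (fun t => (F t).det)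

/-- Matrix functions with entries in `H^p(T^N)`. -/
def MatMemHpN (N : ℕ) (p : ℝ) {d : ℕ}
    (F : (Fin N → 𝕋) → Matrix (Fin d) (Fin d) ℂ) : Prop :=
  ∀ i j, MemHpN N p fun t => F t i j

/-- Outer-type matrix functions in `H^p(T^N)_O^{d×d}` (Definition 2.3). -/
def MatOuterHpN (N : ℕ) (p : ℝ) {d : ℕ}
    (F : (Fin N → 𝕋) → Matrix (Fin d) (Fin d) ℂ) : Prop :=
  MatMemHpN N p F ∧
    ∃ r : ℝ, 0 < r ∧ MemHpN N r (fun t => (F t).det) ∧ MemHpON N r (fun t => (F t).det)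

/-- Convergence `fs n → f` in the `L^p` norm. -/
def TendstoLp {α : Type*} [MeasurableSpace α] (p : ℝ) (ν : Measure α)
    (fs : ℕ → α → ℂ) (f : α → ℂ) : Prop :=
  Tendsto (fun n => eLpNorm (fs n - f) (ENNReal.ofReal p) ν) atTop (nhds 0)

/-- Convergence "restricted to hyperplanes" `fs ↣ f` in `L^p(T^N)`. -/
def HypTendsto (p : ℝ) (N : ℕ) (fs : ℕ → (Fin N → 𝕋) → ℂ) (f : (Fin N → 𝕋) → ℂ) : Prop :=
  TendstoLp p (μTN N) fs f ∧
  ∀ (a b : ℕ) (h : a + b = N), 1 ≤ a → 1 ≤ b →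
    ∀ᵐ y ∂μTN b, TendstoLp p (μTN a) (fun n => splitL h (fs n) y) (splitL h f y)

/-- The average of `f` over the first `a` of `N = a + b` variables. -/
def avgFirst {N : ℕ} (a b : ℕ) (h : a + b = N) (f : (Fin N → 𝕋) → ℂ) :
    (Fin b → 𝕋) → ℂ :=
  fun y => ∫ x, splitL h f y x ∂μTN a

lemma cotHalf_periodic :
    Function.Periodic (fun x : ℝ => Real.cos (x / 2) / Real.sin (x / 2)) (2 * Real.pi) := by
  intro x
  have h : (x + 2 * Real.pi) / 2 = x / 2 + Real.pi := by ring
  simp only [h, Real.cos_add_pi, Real.sin_add_pi, neg_div_neg_eq]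

/-- The kernel `cot(θ/2)` as a function on the circle. -/
def cotHalf : 𝕋 → ℝ := cotHalf_periodic.lift

/-- The conjugate function (boundary Hilbert transform) of `h : 𝕋 → ℝ`,
`𝒮(h)(e^{iτ}) = (1/2π) p.v.∫ h(e^{iθ}) cot((τ-θ)/2) dθ`, as a principal value. -/
def conjFn (h : 𝕋 → ℝ) (τ : 𝕋) : ℝ :=
  limUnder (nhdsWithin 0 (Set.Ioi (0 : ℝ)))
    (fun ε : ℝ => (2 * Real.pi)⁻¹ * ∫ θ in {θ : 𝕋 | ε < dist τ θ}, h θ * cotHalf (τ - θ))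

/-- The operator `𝒮₁`: the conjugate function applied in the first variable. -/
def conj1 {N : ℕ} (h : (Fin (N + 1) → 𝕋) → ℝ) (t : Fin (N + 1) → 𝕋) : ℝ :=
  conjFn (fun s => h (Fin.cons s (fun i => t i.succ))) (t 0)

end

/-! Via `appendPair`, `T^N = T^j × T^m` and averaging over the first `j` variables is integration
over the first factor of a product of probability spaces. For `p ≥ 1` this is a contraction of
`L^p` (Jensen on each fibre, then Tonelli), which gives the `L^p` convergence of the averages.
Fixing the last `b` variables of `T^m` commutes with averaging, so the convergence of `fₙ` on the
hyperplanes of `T^N` in the first `j + a` variables gives that of the averages on the hyperplanes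
of `T^m`. -/

section Minkowski

variable {α β E : Type*} [MeasurableSpace α] [MeasurableSpace β] [NormedAddCommGroup E]
  [NormedSpace ℝ E] {μ : Measure α} {ν : Measure β} {p : ℝ≥0∞}

theorem enorm_integral_le_eLpNorm [IsProbabilityMeasure μ] (hp : 1 ≤ p) {f : α → E}
    (hf : AEStronglyMeasurable f μ) : ‖∫ x, f x ∂μ‖ₑ ≤ eLpNorm f p μ :=
  calc ‖∫ x, f x ∂μ‖ₑ ≤ ∫⁻ x, ‖f x‖ₑ ∂μ := enorm_integral_le_lintegral_enorm f
    _ = eLpNorm f 1 μ := eLpNorm_one_eq_lintegral_enorm.symm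
    _ ≤ eLpNorm f p μ := eLpNorm_le_eLpNorm_of_exponent_le hp hf

theorem eLpNorm_integral_fst_le [IsProbabilityMeasure μ] [SFinite ν] (hp : 1 ≤ p)
    (hp_top : p ≠ ∞) {F : α × β → E} (hF : AEStronglyMeasurable F (μ.prod ν)) :
    eLpNorm (fun y => ∫ x, F (x, y) ∂μ) p ν ≤ eLpNorm F p (μ.prod ν) := by
  have hp0 : p ≠ 0 := (zero_lt_one.trans_le hp).ne'
  have hslices : ∀ᵐ y ∂ν, AEStronglyMeasurable (fun x => F (x, y)) μ :=
    hF.prod_swap.prodMk_left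
  rw [eLpNorm_eq_lintegral_rpow_enorm_toReal hp0 hp_top,
    eLpNorm_eq_lintegral_rpow_enorm_toReal hp0 hp_top,
    lintegral_prod_symm _ (hF.enorm.pow_const _)]
  gcongr ?_ ^ _
  refine lintegral_mono_ae ?_
  filter_upwards [hslices] with y hy
  calc ‖∫ x, F (x, y) ∂μ‖ₑ ^ p.toReal ≤ eLpNorm (fun x => F (x, y)) p μ ^ p.toReal := by
        gcongr; exact enorm_integral_le_eLpNorm hp hy
    _ = ∫⁻ x, ‖F (x, y)‖ₑ ^ p.toReal ∂μ := by
        rw [eLpNorm_eq_lintegral_rpow_enorm_toReal hp0 hp_top, ← ENNReal.rpow_mul,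
          one_div_mul_cancel (ENNReal.toReal_pos hp0 hp_top).ne', ENNReal.rpow_one]

end Minkowski

def appendPair {α : Type*} {j m N : ℕ} (hN : j + m = N) (q : (Fin j → α) × (Fin m → α)) :
    Fin N → α :=
  fun i => Fin.append q.1 q.2 (Fin.cast hN.symm i)

theorem measurePreserving_appendPair {α : Type*} [MeasurableSpace α] (μ : Measure α)
    [SigmaFinite μ] {j m N : ℕ} (hN : j + m = N) :
    MeasurePreserving (appendPair hN)
      ((Measure.pi fun _ : Fin j => μ).prod (Measure.pi fun _ : Fin m => μ))
      (Measure.pi fun _ : Fin N => μ) := by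
  subst hN
  have h : appendPair (α := α) (rfl : j + m = j + m) =
      MeasurableEquiv.piCongrLeft (fun _ => α) finSumFinEquiv ∘
        (MeasurableEquiv.sumPiEquivProdPi fun _ => α).symm := by
    funext q i
    obtain ⟨k, rfl⟩ := finSumFinEquiv.surjective i
    rw [Function.comp_apply, MeasurableEquiv.coe_piCongrLeft, Equiv.piCongrLeft_apply_apply]
    rcases k with k | k <;> simp [appendPair, MeasurableEquiv.coe_sumPiEquivProdPi_symm]
  rw [h]
  exact (measurePreserving_piCongrLeft _ _).comp
    (measurePreserving_sumPiEquivProdPi_symm fun _ => μ)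

theorem MeasureTheory.Integrable.ae_integrable_splitL {N a b : ℕ} (h : a + b = N)
    {g : (Fin N → 𝕋) → ℂ} (hg : Integrable g (μTN N)) :
    ∀ᵐ y ∂μTN b, Integrable (splitL h g y) (μTN a) :=
  ((measurePreserving_appendPair μT h).integrable_comp hg.aestronglyMeasurable).2 hg
    |>.prod_left_ae

theorem eLpNorm_avgFirst_le {p : ℝ≥0∞} (hp : 1 ≤ p) (hp_top : p ≠ ∞) {j m N : ℕ}
    (hN : j + m = N) {g : (Fin N → 𝕋) → ℂ} (hg : AEStronglyMeasurable g (μTN N)) :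
    eLpNorm (avgFirst j m hN g) p (μTN m) ≤ eLpNorm g p (μTN N) := by
  have hmp : MeasurePreserving (appendPair hN) ((μTN j).prod (μTN m)) (μTN N) :=
    measurePreserving_appendPair μT hN
  calc eLpNorm (avgFirst j m hN g) p (μTN m)
      = eLpNorm (fun y => ∫ x, (g ∘ appendPair hN) (x, y) ∂μTN j) p (μTN m) := rfl
    _ ≤ eLpNorm (g ∘ appendPair hN) p ((μTN j).prod (μTN m)) :=
        eLpNorm_integral_fst_le hp hp_top (hg.comp_measurePreserving hmp)
    _ = eLpNorm g p (μTN N) := eLpNorm_comp_measurePreserving hg hmp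

theorem avgFirst_sub {j m N : ℕ} (hN : j + m = N) {g h : (Fin N → 𝕋) → ℂ}
    (hg : Integrable g (μTN N)) (hh : Integrable h (μTN N)) :
    avgFirst j m hN (g - h) =ᵐ[μTN m] avgFirst j m hN g - avgFirst j m hN h := by
  filter_upwards [hg.ae_integrable_splitL hN, hh.ae_integrable_splitL hN] with y hgy hhy
    using integral_sub hgy hhy

theorem tendstoLp_avgFirst {p : ℝ} (hp : 1 ≤ p) {j m N : ℕ} (hN : j + m = N)
    {gs : ℕ → (Fin N → 𝕋) → ℂ} {g : (Fin N → 𝕋) → ℂ}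
    (hgs : ∀ n, Integrable (gs n) (μTN N)) (hg : Integrable g (μTN N))
    (hconv : TendstoLp p (μTN N) gs g) :
    TendstoLp p (μTN m) (fun n => avgFirst j m hN (gs n)) (avgFirst j m hN g) := by
  refine tendsto_of_tendsto_of_tendsto_of_le_of_le tendsto_const_nhds hconv (fun _ => zero_le)
    fun n => ?_
  rw [← eLpNorm_congr_ae (avgFirst_sub hN (hgs n) hg)]
  exact eLpNorm_avgFirst_le (ENNReal.one_le_ofReal.2 hp) ENNReal.ofReal_ne_top hN
    ((hgs n).sub hg).aestronglyMeasurable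

theorem splitL_avgFirst {j a b m N : ℕ} (hab : a + b = m) (hN : j + m = N)
    (hN' : j + a + b = N) (g : (Fin N → 𝕋) → ℂ) (y : Fin b → 𝕋) :
    splitL hab (avgFirst j m hN g) y = avgFirst j a rfl (splitL hN' g y) := by
  subst hab hN
  funext x
  simp only [splitL, avgFirst]
  congr 1
  funext u
  simp [Fin.append_assoc]

theorem statement10_general (p : ℝ) (hp : 1 ≤ p) (j m N : ℕ)
    (hN : j + m = N)
    (fs : ℕ → (Fin N → 𝕋) → ℂ) (f : (Fin N → 𝕋) → ℂ)
    (hmem : ∀ n, MemLp (fs n) (ENNReal.ofReal p) (μTN N))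
    (hfmem : MemLp f (ENNReal.ofReal p) (μTN N))
    (hconv : HypTendsto p N fs f) :
    HypTendsto p m (fun n => avgFirst j m hN (fs n)) (avgFirst j m hN f) := by
  have hint : ∀ n, Integrable (fs n) (μTN N) :=
    fun n => (hmem n).integrable (ENNReal.one_le_ofReal.2 hp)
  have hfint : Integrable f (μTN N) := hfmem.integrable (ENNReal.one_le_ofReal.2 hp)
  refine ⟨tendstoLp_avgFirst hp hN hint hfint hconv.1, fun a b hab ha hb => ?_⟩
  have hN' : j + a + b = N := by omega
  filter_upwards [hconv.2 (j + a) b hN' (by omega) hb, hfint.ae_integrable_splitL hN',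
    ae_all_iff.2 fun n => (hint n).ae_integrable_splitL hN'] with y hy hfy hfsy
  simp only [splitL_avgFirst hab hN hN']
  exact tendstoLp_avgFirst hp rfl hfsy hfy hy

/-- **Lemma 7.2.** If `fₙ ↣ f` in `L^p(T^N)` and `1 ≤ j ≤ N - 1`,
then the averages over the first `j` variables satisfy `f̂ₙ ↣ f̂` in `L^p(T^{N-j})`. -/
theorem statement10 (p : ℝ) (hp : 1 ≤ p) (j m N : ℕ) (hj : 1 ≤ j) (hm : 1 ≤ m)
    (hN : j + m = N)
    (fs : ℕ → (Fin N → 𝕋) → ℂ) (f : (Fin N → 𝕋) → ℂ)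
    (hmem : ∀ n, MemLp (fs n) (ENNReal.ofReal p) (μTN N))
    (hfmem : MemLp f (ENNReal.ofReal p) (μTN N))
    (hconv : HypTendsto p N fs f) :
    HypTendsto p m (fun n => avgFirst j m hN (fs n)) (avgFirst j m hN f) :=
  statement10_general p hp j m N hN fs f hmem hfmem hconv
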